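/- Let G = (V,E) be a finite simple undirected graph, S, T ⊆ V disjoint vertex sets, and k a nonnegative integer. Let ℱ be the family of all important S–T separators of size at most k. Let Y ⊆ V be a vertex set such that for every X ∈ ℱ, |X ∖ Y| ≥ 1 (no member of ℱ is contained in Y). Then there exists a vertex set H with |H| ≤ k such that H ∩ Y = ∅ and H intersects every member of ℱ, i.e., for every X ∈ ℱ, |H ∩ X| ≥ 1. -/

import Mathlib

open scoped Classical
set_option linter.unusedSectionVars false

variable {V : Type*} [Fintype V] [DecidableEq V]

/-- The graph `G − X`: the graph obtained from `G` by deleting the vertices of `X`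
(encoded on the same vertex type: vertices of `X` become isolated). -/
def removeVerts (G : SimpleGraph V) (X : Set V) : SimpleGraph V where
  Adj u v := G.Adj u v ∧ u ∉ X ∧ v ∉ X
  symm := ⟨by rintro u v ⟨h, hu, hv⟩; exact ⟨h.symm, hv, hu⟩⟩
  loopless := ⟨by rintro v ⟨h, -, -⟩; exact G.irrefl h⟩

/-- The open neighborhood `N(C)` of a vertex set `C`. -/
def nbhd (G : SimpleGraph V) (C : Set V) : Set V :=
  {v | v ∉ C ∧ ∃ u ∈ C, G.Adj u v}

/-- The set of vertices connected to `S` in `G − X`. -/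
def reachSet (G : SimpleGraph V) (X S : Set V) : Set V :=
  {v | ∃ s ∈ S, (removeVerts G X).Reachable s v}

/-- `X` is an `S`–`T` separator: `X ⊆ V ∖ (S ∪ T)` and no path of `G − X` connects `S` to `T`. -/
def IsSeparator (G : SimpleGraph V) (S T X : Set V) : Prop :=
  Disjoint X (S ∪ T) ∧ ∀ s ∈ S, ∀ t ∈ T, ¬ (removeVerts G X).Reachable s t

/-- A minimal `S`–`T` separator. -/
def IsMinimalSep (G : SimpleGraph V) (S T X : Set V) : Prop :=
  IsSeparator G S T X ∧ ∀ X' ⊂ X, ¬ IsSeparator G S T X'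

/-- A minimum `S`–`T` separator. -/
def IsMinimumSep (G : SimpleGraph V) (S T X : Set V) : Prop :=
  IsSeparator G S T X ∧ ∀ X', IsSeparator G S T X' → X.ncard ≤ X'.ncard

/-- A separator `X` is farthest (w.r.t. `S`) if every `S`–`T` separator whose reachable set
strictly contains that of `X` is strictly larger. -/
def IsFarthest (G : SimpleGraph V) (S T X : Set V) : Prop :=
  ∀ X', IsSeparator G S T X' → reachSet G X S ⊂ reachSet G X' S → X.ncard < X'.ncard

/-- An important `S`–`T` separator. -/
def IsImportantSep (G : SimpleGraph V) (S T X : Set V) : Prop :=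
  IsMinimalSep G S T X ∧ ∀ X', IsMinimalSep G S T X' →
    reachSet G X S ⊂ reachSet G X' S → X.ncard < X'.ncard

section Helpers

variable (G : SimpleGraph V)

lemma removeVerts_mono {X W : Set V} (h : W ⊆ X) : removeVerts G X ≤ removeVerts G W := by
  rintro u v ⟨ha, hu, hv⟩
  exact ⟨ha, fun c => hu (h c), fun c => hv (h c)⟩

lemma reach_mono {X W S : Set V} (h : W ⊆ X) : reachSet G X S ⊆ reachSet G W S := by
  rintro v ⟨s, hs, hr⟩
  exact ⟨s, hs, hr.mono (removeVerts_mono G h)⟩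

lemma subset_reach (X S : Set V) : S ⊆ reachSet G X S :=
  fun s hs => ⟨s, hs, SimpleGraph.Reachable.refl s⟩

lemma reach_source_mono {X S S' : Set V} (h : S ⊆ S') : reachSet G X S ⊆ reachSet G X S' := by
  rintro v ⟨s, hs, hr⟩
  exact ⟨s, h hs, hr⟩

lemma walk_closed {Z P : Set V} (hP : ∀ u ∈ P, ∀ w, G.Adj u w → w ∉ Z → w ∈ P)
    {a b : V} (p : (removeVerts G Z).Walk a b) (ha : a ∈ P) : b ∈ P := by
  induction p with
  | nil => exact ha
  | cons h p ih => exact ih (hP _ ha _ h.1 h.2.2)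

lemma reach_not_mem {X S : Set V} (hd : ∀ s ∈ S, s ∉ X) {v : V}
    (hv : v ∈ reachSet G X S) : v ∉ X := by
  obtain ⟨s, hs, ⟨p⟩⟩ := hv
  exact walk_closed G (Z := X) (P := {x | x ∉ X}) (fun u _ w _ hw => hw) p (hd s hs)

lemma reach_adj {X S : Set V} {u v : V} (hu : u ∈ reachSet G X S) (huX : u ∉ X)
    (ha : G.Adj u v) (hv : v ∉ X) : v ∈ reachSet G X S := by
  obtain ⟨s, hs, hr⟩ := hu
  exact ⟨s, hs, hr.trans (SimpleGraph.Adj.reachable ⟨ha, huX, hv⟩)⟩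

lemma nbhd_reach_subset {X S : Set V} (hd : ∀ s ∈ S, s ∉ X) :
    nbhd G (reachSet G X S) ⊆ X := by
  rintro v ⟨hv, u, hu, ha⟩
  by_contra hvX
  exact hv (reach_adj G hu (reach_not_mem G hd hu) ha hvX)

lemma reach_nbhd_subset {D S₀ : Set V} (hS : S₀ ⊆ D) : reachSet G (nbhd G D) S₀ ⊆ D := by
  rintro v ⟨s, hs, ⟨p⟩⟩
  refine walk_closed G (P := D) (fun u hu w haw hw => ?_) p (hS hs)
  by_contra hwD
  exact hw ⟨hwD, u, hu, haw⟩

lemma reach_trans {X S : Set V} {v w : V} (hv : v ∈ reachSet G X S)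
    (h : (removeVerts G X).Reachable v w) : w ∈ reachSet G X S := by
  obtain ⟨s, hs, hr⟩ := hv
  exact ⟨s, hs, hr.trans h⟩

lemma reach_absorb {X S A : Set V} (hA : A ⊆ reachSet G X S) :
    reachSet G X (S ∪ A) = reachSet G X S := by
  apply subset_antisymm
  · rintro v ⟨s, hs, hr⟩
    rcases hs with hs | hs
    · exact ⟨s, hs, hr⟩
    · exact reach_trans G (hA hs) hr
  · exact reach_source_mono G Set.subset_union_left

lemma walk_transfer {Z W : Set V} {a b : V} (p : (removeVerts G Z).Walk a b)
    (h : ∀ z ∈ p.support, z ∉ W) : (removeVerts G W).Reachable a b := by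
  induction p with
  | nil => exact SimpleGraph.Reachable.refl _
  | @cons u v w hadj p ih =>
    have hu : u ∉ W := h u (by simp)
    have hv : v ∉ W := h v (by simp)
    have hadj' : (removeVerts G W).Adj u v := ⟨hadj.1, hu, hv⟩
    exact hadj'.reachable.trans (ih (fun z hz => h z (by simp [hz])))

lemma walk_support_cases {Z : Set V} {a b : V} (p : (removeVerts G Z).Walk a b) :
    ∀ z ∈ p.support, z = a ∨ z = b ∨ z ∉ Z := by
  induction p with
  | nil => intro z hz; simp at hz; exact Or.inl hz
  | @cons u v w hadj p ih =>
    intro z hz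
    rw [SimpleGraph.Walk.support_cons, List.mem_cons] at hz
    rcases hz with rfl | hz
    · exact Or.inl rfl
    · rcases ih z hz with rfl | h
      · exact Or.inr (Or.inr hadj.2.2)
      · exact Or.inr h

lemma support_subset_reach {X S : Set V} {s w : V} (hs : s ∈ S)
    (p : (removeVerts G X).Walk s w) : ∀ z ∈ p.support, z ∈ reachSet G X S :=
  fun z hz => ⟨s, hs, ⟨p.takeUntil z hz⟩⟩

lemma reach_transfer {X W S : Set V} (hdis : ∀ z ∈ reachSet G X S, z ∉ W) :
    reachSet G X S ⊆ reachSet G W S := by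
  rintro v ⟨s, hs, ⟨p⟩⟩
  exact ⟨s, hs, walk_transfer G p (fun z hz => hdis z (support_subset_reach G hs p z hz))⟩

end Helpers

section Part2

variable (G : SimpleGraph V)

lemma nbhd_disjoint (D : Set V) : ∀ z ∈ nbhd G D, z ∉ D := fun _ hz => hz.1

lemma nbhd_union_subset (A B : Set V) : nbhd G (A ∪ B) ⊆ nbhd G A ∪ nbhd G B := by
  rintro z ⟨hz, u, hu, ha⟩
  rcases hu with hu | hu
  · exact Or.inl ⟨fun c => hz (Or.inl c), u, hu, ha⟩
  · exact Or.inr ⟨fun c => hz (Or.inr c), u, hu, ha⟩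

lemma nbhd_inter_subset (A B : Set V) : nbhd G (A ∩ B) ⊆ nbhd G A ∪ nbhd G B := by
  rintro z ⟨hz, u, hu, ha⟩
  by_cases hzA : z ∈ A
  · exact Or.inr ⟨fun c => hz ⟨hzA, c⟩, u, hu.2, ha⟩
  · exact Or.inl ⟨hzA, u, hu.1, ha⟩

lemma nbhd_submod (A B : Set V) :
    (nbhd G (A ∪ B)).ncard + (nbhd G (A ∩ B)).ncard
      ≤ (nbhd G A).ncard + (nbhd G B).ncard := by
  have h1 : nbhd G (A ∪ B) ∪ nbhd G (A ∩ B) ⊆ nbhd G A ∪ nbhd G B := by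
    rintro z (hz | hz)
    · exact nbhd_union_subset G A B hz
    · exact nbhd_inter_subset G A B hz
  have h2 : nbhd G (A ∪ B) ∩ nbhd G (A ∩ B) ⊆ nbhd G A ∩ nbhd G B := by
    rintro z ⟨hz1, hz2⟩
    obtain ⟨hz2', u, hu, ha⟩ := hz2
    exact ⟨⟨fun c => hz1.1 (Or.inl c), u, hu.1, ha⟩, ⟨fun c => hz1.1 (Or.inr c), u, hu.2, ha⟩⟩
  calc (nbhd G (A ∪ B)).ncard + (nbhd G (A ∩ B)).ncard
      = (nbhd G (A ∪ B) ∪ nbhd G (A ∩ B)).ncard + (nbhd G (A ∪ B) ∩ nbhd G (A ∩ B)).ncard := by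
        rw [Set.ncard_union_add_ncard_inter]
    _ ≤ (nbhd G A ∪ nbhd G B).ncard + (nbhd G A ∩ nbhd G B).ncard := by
        exact Nat.add_le_add (Set.ncard_le_ncard h1 (Set.toFinite _))
          (Set.ncard_le_ncard h2 (Set.toFinite _))
    _ = (nbhd G A).ncard + (nbhd G B).ncard := by
        rw [Set.ncard_union_add_ncard_inter]

variable {G}

lemma IsSeparator.notMem_S {S₀ T X : Set V} (h : IsSeparator G S₀ T X) :
    ∀ s ∈ S₀, s ∉ X := fun s hs c => Set.disjoint_left.mp h.1 c (Or.inl hs)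

lemma IsSeparator.notMem_T {S₀ T X : Set V} (h : IsSeparator G S₀ T X) :
    ∀ t ∈ T, t ∉ X := fun t ht c => Set.disjoint_left.mp h.1 c (Or.inr ht)

lemma IsSeparator.reach_not_T {S₀ T X : Set V} (h : IsSeparator G S₀ T X) :
    ∀ t ∈ T, t ∉ reachSet G X S₀ := by
  rintro t ht ⟨s, hs, hr⟩
  exact h.2 s hs t ht hr

lemma IsSeparator.reach_not_X {S₀ T X : Set V} (h : IsSeparator G S₀ T X) :
    ∀ v ∈ reachSet G X S₀, v ∉ X :=
  fun v hv => reach_not_mem G h.notMem_S hv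

/-- `N(D)` is a separator when `S₀ ⊆ D`, `T ∩ D = ∅` and `N(D) ∩ T = ∅`. -/
lemma isSep_nbhd {D S₀ T : Set V} (hS : S₀ ⊆ D) (hT : ∀ t ∈ T, t ∉ D)
    (hNT : ∀ z ∈ nbhd G D, z ∉ T) : IsSeparator G S₀ T (nbhd G D) := by
  constructor
  · rw [Set.disjoint_left]
    rintro z hz (hzS | hzT)
    · exact hz.1 (hS hzS)
    · exact hNT z hz hzT
  · intro s hs t ht hr
    have : t ∈ reachSet G (nbhd G D) S₀ := ⟨s, hs, hr⟩
    exact hT t ht (reach_nbhd_subset G hS this)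

lemma sep_of_source_subset {S₀ S₁ T X : Set V} (h : IsSeparator G S₁ T X) (hs : S₀ ⊆ S₁) :
    IsSeparator G S₀ T X :=
  ⟨h.1.mono_right (Set.union_subset_union_left T hs), fun s hss t ht => h.2 s (hs hss) t ht⟩

lemma exists_minimal_sep {S₀ T X : Set V} (h : IsSeparator G S₀ T X) :
    ∃ X', X' ⊆ X ∧ IsMinimalSep G S₀ T X' := by
  have key : ∀ n (X : Set V), X.ncard ≤ n → IsSeparator G S₀ T X →
      ∃ X', X' ⊆ X ∧ IsMinimalSep G S₀ T X' := by
    intro n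
    induction n with
    | zero =>
      intro X hc hsep
      have hX : X = ∅ := by
        have := (Set.ncard_eq_zero (Set.toFinite X)).mp (Nat.le_zero.mp hc)
        exact this
      subst hX
      refine ⟨∅, subset_rfl, hsep, fun X' h' _ => ?_⟩
      exact (Set.ssubset_iff_subset_ne.mp h').2 (Set.subset_empty_iff.mp
        (Set.ssubset_iff_subset_ne.mp h').1)
    | succ n ih =>
      intro X hc hsep
      by_cases hmin : ∀ X' ⊂ X, ¬ IsSeparator G S₀ T X'
      · exact ⟨X, subset_rfl, hsep, hmin⟩
      · push_neg at hmin
        obtain ⟨X', hss, hsep'⟩ := hmin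
        have : X'.ncard ≤ n := by
          have := Set.ncard_lt_ncard hss (Set.toFinite X)
          omega
        obtain ⟨X'', h1, h2⟩ := ih X' this hsep'
        exact ⟨X'', h1.trans hss.subset, h2⟩
  exact key X.ncard X le_rfl h

lemma IsMinimumSep.isMinimalSep {S₀ T X : Set V} (h : IsMinimumSep G S₀ T X) :
    IsMinimalSep G S₀ T X := by
  refine ⟨h.1, fun X' hss hsep => ?_⟩
  have := h.2 X' hsep
  have := Set.ncard_lt_ncard hss (Set.toFinite X)
  omega

/-- A minimal separator is contained in the neighborhood of its reach set. -/
lemma IsMinimalSep.subset_nbhd {S₀ T X : Set V} (h : IsMinimalSep G S₀ T X) :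
    X ⊆ nbhd G (reachSet G X S₀) := by
  intro x hx
  by_contra hxn
  refine h.2 (X \ {x}) ⟨Set.diff_subset, fun c => (c hx).2 rfl⟩ ?_
  set C := reachSet G X S₀ with hC
  have hsub : reachSet G (X \ {x}) S₀ ⊆ C := by
    rintro v ⟨s, hs, ⟨p⟩⟩
    refine walk_closed G (P := C) (fun u hu w haw hw => ?_) p (subset_reach G X S₀ hs)
    by_contra hwC
    have hwn : w ∈ nbhd G C := ⟨hwC, u, hu, haw⟩
    have hwX : w ∈ X := nbhd_reach_subset G h.1.notMem_S hwn
    have hwx : w = x := by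
      by_contra hne
      exact hw ⟨hwX, hne⟩
    exact hxn (hwx ▸ hwn)
  refine ⟨h.1.1.mono_left Set.diff_subset, fun s hs t ht hr => ?_⟩
  have : t ∈ C := hsub ⟨s, hs, hr⟩
  exact h.1.reach_not_T t ht this

lemma exists_farthest_min {S₀ T : Set V} (hex : ∃ X, IsSeparator G S₀ T X) :
    ∃ Xf, IsMinimumSep G S₀ T Xf ∧ IsFarthest G S₀ T Xf := by
  obtain ⟨X₀, hX₀⟩ := hex
  set N : Set ℕ := {n | ∃ X, IsSeparator G S₀ T X ∧ X.ncard = n} with hN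
  have hNne : N.Nonempty := ⟨X₀.ncard, X₀, hX₀, rfl⟩
  obtain ⟨X₁, hX₁, hc₁⟩ := Nat.sInf_mem hNne
  have hmin : ∀ X', IsSeparator G S₀ T X' → sInf N ≤ X'.ncard :=
    fun X' h' => Nat.sInf_le ⟨X', h', rfl⟩
  set s : Set (Set V) := {X | IsSeparator G S₀ T X ∧ X.ncard = sInf N} with hs
  obtain ⟨Xf, hXfs, hmax⟩ := Set.Finite.exists_maximalFor (fun X => reachSet G X S₀) s
    (Set.toFinite s) ⟨X₁, hX₁, hc₁⟩
  refine ⟨Xf, ⟨hXfs.1, fun X' h' => hXfs.2 ▸ hmin X' h'⟩, fun X' h' hss => ?_⟩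
  by_contra hle
  push_neg at hle
  have hX'm : X' ∈ s := ⟨h', le_antisymm (hle.trans_eq hXfs.2) (hmin X' h')⟩
  have := hmax hX'm hss.subset
  exact (Set.ssubset_iff_subset_ne.mp hss).2 (Set.Subset.antisymm hss.subset this)

end Part2

section Part3

variable {G : SimpleGraph V}

/-- If a separator `Z`'s reach-set has a small neighborhood, it is absorbed by the
farthest minimum separator's reach-set. -/
lemma farthest_absorb {S' T Xf Z : Set V} (hmin : IsMinimumSep G S' T Xf)
    (hfar : IsFarthest G S' T Xf) (hZ : IsSeparator G S' T Z)
    (hcard : (nbhd G (reachSet G Z S')).ncard ≤ Xf.ncard) :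
    reachSet G Z S' ⊆ reachSet G Xf S' := by
  by_contra hns
  rw [Set.not_subset] at hns
  obtain ⟨u, huA, huB⟩ := hns
  set A := reachSet G Z S' with hA
  set B := reachSet G Xf S' with hB
  have hSA : S' ⊆ A := subset_reach G Z S'
  have hSB : S' ⊆ B := subset_reach G Xf S'
  have hNA : nbhd G A ⊆ Z := nbhd_reach_subset G hZ.notMem_S
  have hNB : nbhd G B ⊆ Xf := nbhd_reach_subset G hmin.1.notMem_S
  have hTA : ∀ t ∈ T, t ∉ A := hZ.reach_not_T
  have hTB : ∀ t ∈ T, t ∉ B := hmin.1.reach_not_T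
  have hint : IsSeparator G S' T (nbhd G (A ∩ B)) := by
    refine isSep_nbhd (fun s hs => ⟨hSA hs, hSB hs⟩) (fun t ht c => hTA t ht c.1) ?_
    intro z hz ht
    rcases nbhd_inter_subset G A B hz with h | h
    · exact hZ.notMem_T z ht (hNA h)
    · exact hmin.1.notMem_T z ht (hNB h)
  have hint_card : Xf.ncard ≤ (nbhd G (A ∩ B)).ncard := hmin.2 _ hint
  have hsubmod := nbhd_submod G A B
  have hNBcard : (nbhd G B).ncard ≤ Xf.ncard := Set.ncard_le_ncard hNB (Set.toFinite _)
  have hW : (nbhd G (A ∪ B)).ncard ≤ Xf.ncard := by omega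
  have hWsep : IsSeparator G S' T (nbhd G (A ∪ B)) := by
    refine isSep_nbhd (fun s hs => Or.inl (hSA hs)) ?_ ?_
    · rintro t ht (h | h)
      exacts [hTA t ht h, hTB t ht h]
    · intro z hz ht
      rcases nbhd_union_subset G A B hz with h | h
      · exact hZ.notMem_T z ht (hNA h)
      · exact hmin.1.notMem_T z ht (hNB h)
  have hAr : A ⊆ reachSet G (nbhd G (A ∪ B)) S' :=
    reach_transfer G (fun z hz c => c.1 (Or.inl hz))
  have hBr : B ⊆ reachSet G (nbhd G (A ∪ B)) S' :=
    reach_transfer G (fun z hz c => c.1 (Or.inr hz))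
  have := hfar _ hWsep ((Set.ssubset_iff_of_subset hBr).mpr ⟨u, hAr huA, huB⟩)
  omega

/-- The pushing lemma: the reach set of a farthest minimum `S'`–`T` separator is contained
in the (`S`-)reach set of every important `S`–`T` separator compatible with `S'`. -/
lemma push_lemma {S S' T Xf X : Set V} (hS : S ⊆ S')
    (hmin : IsMinimumSep G S' T Xf) (hfar : IsFarthest G S' T Xf)
    (hX : IsImportantSep G S T X) (hreach : S' \ S ⊆ reachSet G X S) :
    reachSet G Xf S' ⊆ reachSet G X S := by
  by_contra hns
  rw [Set.not_subset] at hns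
  obtain ⟨u, huB, huA⟩ := hns
  set A := reachSet G X S with hA
  set B := reachSet G Xf S' with hB
  have hsepX : IsSeparator G S T X := hX.1.1
  have hS'A : S' ⊆ A := by
    intro s hs
    by_cases hsS : s ∈ S
    · exact subset_reach G X S hsS
    · exact hreach ⟨hs, hsS⟩
  have hA' : reachSet G X S' = A := by
    rw [← Set.union_diff_cancel hS, reach_absorb G hreach]
  have hSB : S' ⊆ B := subset_reach G Xf S'
  have hNA : nbhd G A ⊆ X := nbhd_reach_subset G hsepX.notMem_S
  have hNB : nbhd G B ⊆ Xf := nbhd_reach_subset G hmin.1.notMem_S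
  have hTA : ∀ t ∈ T, t ∉ A := hsepX.reach_not_T
  have hTB : ∀ t ∈ T, t ∉ B := hmin.1.reach_not_T
  -- the inner separator at level S'
  have hint : IsSeparator G S' T (nbhd G (A ∩ B)) := by
    refine isSep_nbhd (fun s hs => ⟨hS'A hs, hSB hs⟩) (fun t ht c => hTA t ht c.1) ?_
    intro z hz ht
    rcases nbhd_inter_subset G A B hz with h | h
    · exact hsepX.notMem_T z ht (hNA h)
    · exact hmin.1.notMem_T z ht (hNB h)
  have hint_card : Xf.ncard ≤ (nbhd G (A ∩ B)).ncard := hmin.2 _ hint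
  have hsubmod := nbhd_submod G A B
  have hNAcard : (nbhd G A).ncard ≤ X.ncard := Set.ncard_le_ncard hNA (Set.toFinite _)
  have hNBcard : (nbhd G B).ncard ≤ Xf.ncard := Set.ncard_le_ncard hNB (Set.toFinite _)
  have hWcard : (nbhd G (A ∪ B)).ncard ≤ X.ncard := by omega
  -- the union separator at level S
  have hWsep : IsSeparator G S T (nbhd G (A ∪ B)) := by
    refine isSep_nbhd (fun s hs => Or.inl (subset_reach G X S hs)) ?_ ?_
    · rintro t ht (h | h)
      exacts [hTA t ht h, hTB t ht h]
    · intro z hz ht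
      rcases nbhd_union_subset G A B hz with h | h
      · exact hsepX.notMem_T z ht (hNA h)
      · exact hmin.1.notMem_T z ht (hNB h)
  set W := nbhd G (A ∪ B) with hWdef
  have hAr : A ⊆ reachSet G W S := reach_transfer G (fun z hz c => c.1 (Or.inl hz))
  have hBr : B ⊆ reachSet G W S' := reach_transfer G (fun z hz c => c.1 (Or.inr hz))
  have hWreach : reachSet G W S' = reachSet G W S := by
    rw [← Set.union_diff_cancel hS, reach_absorb G (fun z hz => hAr (hreach hz))]
  have huW : u ∈ reachSet G W S := hWreach ▸ hBr huB
  obtain ⟨X₃, hX₃W, hX₃min⟩ := exists_minimal_sep hWsep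
  have hr3 : reachSet G W S ⊆ reachSet G X₃ S := reach_mono G hX₃W
  have hstrict : A ⊂ reachSet G X₃ S :=
    (Set.ssubset_iff_of_subset (fun z hz => hr3 (hAr hz))).mpr ⟨u, hr3 huW, huA⟩
  have h1 := hX.2 X₃ hX₃min hstrict
  have h2 : X₃.ncard ≤ W.ncard := Set.ncard_le_ncard hX₃W (Set.toFinite _)
  omega

/-- Adding a vertex of a farthest minimum separator to the source strictly increases
the minimum separator size. -/
lemma lambda_up {S' T Xf : Set V} {v : V}
    (hmin : IsMinimumSep G S' T Xf) (hfar : IsFarthest G S' T Xf) (hv : v ∈ Xf)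
    {X'' : Set V} (hX'' : IsSeparator G (insert v S') T X'') :
    Xf.ncard < X''.ncard := by
  by_contra hle
  push_neg at hle
  have hX''S' : IsSeparator G S' T X'' := sep_of_source_subset hX'' (Set.subset_insert v S')
  have hge : Xf.ncard ≤ X''.ncard := hmin.2 _ hX''S'
  have hcardeq : X''.ncard = Xf.ncard := le_antisymm hle hge
  have hX''min : IsMinimalSep G S' T X'' := by
    refine ⟨hX''S', fun X₃ hss hsep => ?_⟩
    have h1 := hmin.2 _ hsep
    have h2 := Set.ncard_lt_ncard hss (Set.toFinite X'')
    omega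
  set Cm := reachSet G Xf S' with hCm
  set C₂ := reachSet G X'' S' with hC₂
  have hC₂Cm : C₂ ⊆ Cm := by
    refine farthest_absorb hmin hfar hX''S' ?_
    calc (nbhd G C₂).ncard ≤ X''.ncard :=
          Set.ncard_le_ncard (nbhd_reach_subset G hX''S'.notMem_S) (Set.toFinite _)
      _ = Xf.ncard := hcardeq
  have hX''sub : X'' ⊆ Cm ∪ Xf := by
    intro z hz
    obtain ⟨hzn, u₀, hu₀, ha₀⟩ := hX''min.subset_nbhd hz
    by_cases hzCm : z ∈ Cm
    · exact Or.inl hzCm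
    · exact Or.inr (nbhd_reach_subset G hmin.1.notMem_S ⟨hzCm, u₀, hC₂Cm hu₀, ha₀⟩)
  -- a walk from S' to T through only v among Xf
  have hssub : Xf \ {v} ⊂ Xf := ⟨Set.diff_subset, fun c => (c hv).2 rfl⟩
  have hnsep := hmin.isMinimalSep.2 _ hssub
  have hdisj : Disjoint (Xf \ {v}) (S' ∪ T) := hmin.1.1.mono_left Set.diff_subset
  have hwitness : ∃ s₁ ∈ S', ∃ t₁ ∈ T, (removeVerts G (Xf \ {v})).Reachable s₁ t₁ := by
    by_contra hc
    push_neg at hc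
    exact hnsep ⟨hdisj, hc⟩
  obtain ⟨s₁, hs₁, t₁, ht₁, hr₁⟩ := hwitness
  obtain ⟨p⟩ := hr₁
  have hs₁Xf : s₁ ∉ Xf := hmin.1.notMem_S s₁ hs₁
  have ht₁Xf : t₁ ∉ Xf := hmin.1.notMem_T t₁ ht₁
  have hvP : v ∈ p.support := by
    by_contra hvP
    refine hmin.1.2 s₁ hs₁ t₁ ht₁ (walk_transfer G p ?_)
    intro z hz hzXf
    rcases walk_support_cases G p z hz with rfl | rfl | h
    · exact hs₁Xf hzXf
    · exact ht₁Xf hzXf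
    · exact h ⟨hzXf, fun hzv => hvP (hzv ▸ hz)⟩
  have hvrev : v ∈ p.reverse.support := by
    rw [SimpleGraph.Walk.support_reverse]
    exact List.mem_reverse.mpr hvP
  set q' := (p.reverse.takeUntil v hvrev).reverse with hq'
  have hq'count : q'.support.count v = 1 := by
    rw [hq', SimpleGraph.Walk.support_reverse, List.count_reverse]
    exact p.reverse.count_support_takeUntil_eq_one hvrev
  have hXfsup : ∀ z ∈ q'.support, z ≠ v → z ∉ Xf := by
    intro z hz hne hzXf
    rcases walk_support_cases G q' z hz with rfl | rfl | h
    · exact hne rfl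
    · exact ht₁Xf hzXf
    · exact h ⟨hzXf, hne⟩
  have hCmsup : ∀ z ∈ q'.support, z ≠ v → z ∉ Cm := by
    intro z hz hne hzCm
    set seg := q'.dropUntil z hz with hseg
    have hvnotseg : v ∉ seg.support := by
      intro hvs
      have hvtail : v ∈ seg.support.tail := by
        have hcons := seg.support_eq_cons
        rw [hcons, List.mem_cons] at hvs
        rcases hvs with h | h
        · exact absurd h.symm hne
        · exact h
      have hsplit : q'.support = (q'.takeUntil z hz).support ++ seg.support.tail := by
        rw [← SimpleGraph.Walk.support_append, SimpleGraph.Walk.take_spec]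
      have h1 : 1 ≤ (q'.takeUntil z hz).support.count v :=
        List.count_pos_iff.mpr ((q'.takeUntil z hz).start_mem_support)
      have h2 : 1 ≤ (seg.support.tail).count v := List.count_pos_iff.mpr hvtail
      rw [hsplit, List.count_append] at hq'count
      omega
    have hsegXf : ∀ y ∈ seg.support, y ∉ Xf := by
      intro y hy hyXf
      have hyne : y ≠ v := fun hyv => hvnotseg (hyv ▸ hy)
      rcases walk_support_cases G seg y hy with rfl | rfl | h
      · exact hmin.1.reach_not_X y hzCm hyXf
      · exact ht₁Xf hyXf
      · exact h ⟨hyXf, hyne⟩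
    have hreachzt : (removeVerts G Xf).Reachable z t₁ := walk_transfer G seg hsegXf
    obtain ⟨s₂, hs₂, hr₂⟩ := hzCm
    exact hmin.1.2 s₂ hs₂ t₁ ht₁ (hr₂.trans hreachzt)
  have hvX'' : v ∉ X'' := hX''.notMem_S v (Set.mem_insert v S')
  have hfinal : (removeVerts G X'').Reachable v t₁ := by
    refine walk_transfer G q' ?_
    intro z hz hzX''
    by_cases hzv : z = v
    · exact hvX'' (hzv ▸ hzX'')
    · rcases hX''sub hzX'' with h | h
      · exact hCmsup z hz hzv h
      · exact hXfsup z hz hzv h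
  exact hX''.2 v (Set.mem_insert v S') t₁ ht₁ hfinal

end Part3

section Part4

variable {G : SimpleGraph V}

/-- The reach-invariant propagates when moving a vertex of the current farthest minimum
separator into the source. -/
lemma inv_step {S S' T Xf Xfn : Set V} {v : V} (hS : S ⊆ S')
    (hmin : IsMinimumSep G S' T Xf) (hfar : IsFarthest G S' T Xf)
    (hinv : S' \ S ⊆ reachSet G Xf S) (hv : v ∈ Xf)
    (hminn : IsMinimumSep G (insert v S') T Xfn)
    (hfarn : IsFarthest G (insert v S') T Xfn) :
    insert v S' \ S ⊆ reachSet G Xfn S := by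
  set S'' := insert v S' with hS''
  set A := reachSet G Xf S' with hA
  set B := reachSet G Xfn S'' with hB
  have hS'A : S' ⊆ A := subset_reach G Xf S'
  have hS''B : S'' ⊆ B := subset_reach G Xfn S''
  have hNA : nbhd G A ⊆ Xf := nbhd_reach_subset G hmin.1.notMem_S
  have hNB : nbhd G B ⊆ Xfn := nbhd_reach_subset G hminn.1.notMem_S
  have hTA : ∀ t ∈ T, t ∉ A := hmin.1.reach_not_T
  have hTB : ∀ t ∈ T, t ∉ B := hminn.1.reach_not_T
  -- first: A ⊆ B
  have hAB : A ⊆ B := by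
    by_contra hns
    rw [Set.not_subset] at hns
    obtain ⟨u, huA, huB⟩ := hns
    have hint : IsSeparator G S' T (nbhd G (A ∩ B)) := by
      refine isSep_nbhd (fun s hs => ⟨hS'A hs, hS''B (Set.mem_insert_of_mem v hs)⟩)
        (fun t ht c => hTA t ht c.1) ?_
      intro z hz ht
      rcases nbhd_inter_subset G A B hz with h | h
      · exact hmin.1.notMem_T z ht (hNA h)
      · exact hminn.1.notMem_T z ht (hNB h)
    have hint_card : Xf.ncard ≤ (nbhd G (A ∩ B)).ncard := hmin.2 _ hint
    have hsubmod := nbhd_submod G A B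
    have hNAcard : (nbhd G A).ncard ≤ Xf.ncard := Set.ncard_le_ncard hNA (Set.toFinite _)
    have hNBcard : (nbhd G B).ncard ≤ Xfn.ncard := Set.ncard_le_ncard hNB (Set.toFinite _)
    have hWcard : (nbhd G (A ∪ B)).ncard ≤ Xfn.ncard := by omega
    have hWsep : IsSeparator G S'' T (nbhd G (A ∪ B)) := by
      refine isSep_nbhd (fun s hs => Or.inr (hS''B hs)) ?_ ?_
      · rintro t ht (h | h)
        exacts [hTA t ht h, hTB t ht h]
      · intro z hz ht
        rcases nbhd_union_subset G A B hz with h | h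
        · exact hmin.1.notMem_T z ht (hNA h)
        · exact hminn.1.notMem_T z ht (hNB h)
    have hAr : A ⊆ reachSet G (nbhd G (A ∪ B)) S' :=
      reach_transfer G (fun z hz c => c.1 (Or.inl hz))
    have hAr' : A ⊆ reachSet G (nbhd G (A ∪ B)) S'' :=
      fun z hz => reach_source_mono G (Set.subset_insert v S') (hAr hz)
    have hBr : B ⊆ reachSet G (nbhd G (A ∪ B)) S'' :=
      reach_transfer G (fun z hz c => c.1 (Or.inr hz))
    have := hfarn _ hWsep ((Set.ssubset_iff_of_subset hBr).mpr ⟨u, hAr' huA, huB⟩)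
    omega
  -- A as reach from S
  have hAS : reachSet G Xf S' = reachSet G Xf S := by
    rw [← Set.union_diff_cancel hS, reach_absorb G hinv]
  -- reach_S Xf ⊆ reach_S Xfn
  have htrans : reachSet G Xf S ⊆ reachSet G Xfn S := by
    refine reach_transfer G (fun z hz => ?_)
    have hzA : z ∈ A := by rw [hA, hAS]; exact hz
    exact hminn.1.reach_not_X z (hAB hzA)
  rintro w ⟨hw, hwS⟩
  rcases Set.mem_insert_iff.mp hw with hwv | hwS'
  · subst hwv
    have hvnb : w ∈ nbhd G A := hmin.isMinimalSep.subset_nbhd hv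
    obtain ⟨hvA, u₀, hu₀, ha₀⟩ := hvnb
    have hu₀S' : u₀ ∈ reachSet G Xf S := by rw [← hAS]; exact hu₀
    have hu₀S : u₀ ∈ reachSet G Xfn S := htrans hu₀S'
    have hu₀n : u₀ ∉ Xfn := hminn.1.reach_not_X u₀ (hAB hu₀)
    have hvn : w ∉ Xfn := hminn.1.notMem_S w (Set.mem_insert w S')
    exact reach_adj G hu₀S hu₀n ha₀ hvn
  · exact htrans (hinv ⟨hwS', hwS⟩)

end Part4

section Main

variable {G : SimpleGraph V}

/-- A separator of `S`–`T` whose reach set contains `S' \ S` is a separator of `S'`–`T`. -/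
lemma sep_lift {S S' T X : Set V} (hS : S ⊆ S') (hsep : IsSeparator G S T X)
    (hreach : S' \ S ⊆ reachSet G X S) : IsSeparator G S' T X := by
  have hmem : ∀ s ∈ S', s ∈ reachSet G X S := by
    intro s hs
    by_cases hsS : s ∈ S
    · exact subset_reach G X S hsS
    · exact hreach ⟨hs, hsS⟩
  constructor
  · rw [Set.disjoint_left]
    rintro x hxX (hx | hx)
    · exact hsep.reach_not_X x (hmem x hx) hxX
    · exact hsep.notMem_T x hx hxX
  · intro s hs t ht hr
    exact hsep.reach_not_T t ht (reach_trans G (hmem s hs) hr)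

lemma main_induction {S T : Set V} (k : ℕ) (Y : Set V)
    (hY : ∀ X, IsImportantSep G S T X → X.ncard ≤ k → (X \ Y).Nonempty) :
    ∀ n : ℕ, ∀ S' : Set V, S ⊆ S' → Disjoint S' T →
      ((∀ X'', ¬ IsSeparator G S' T X'') ∨
        ∃ Xf, IsMinimumSep G S' T Xf ∧ IsFarthest G S' T Xf ∧
          S' \ S ⊆ reachSet G Xf S) →
      (∀ X'', IsSeparator G S' T X'' → k < X''.ncard + n) →
      ∃ H : Set V, H.ncard ≤ n ∧ H ∩ Y = ∅ ∧
        ∀ X, IsImportantSep G S T X → X.ncard ≤ k → S' \ S ⊆ reachSet G X S →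
          (H ∩ X).Nonempty := by
  intro n
  induction n with
  | zero =>
    intro S' hS hS'T hINV hn
    refine ⟨∅, by simp, by simp, fun X hX hXk hXr => ?_⟩
    have hXsep' : IsSeparator G S' T X := sep_lift hS hX.1.1 hXr
    have := hn X hXsep'
    omega
  | succ m ih =>
    intro S' hS hS'T hINV hn
    rcases hINV with hno | ⟨Xf, hmin, hfar, hinv⟩
    · refine ⟨∅, by simp, by simp, fun X hX hXk hXr => ?_⟩
      exact absurd (sep_lift hS hX.1.1 hXr) (hno X)
    by_cases hk : k < Xf.ncard
    · refine ⟨∅, by simp, by simp, fun X hX hXk hXr => ?_⟩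
      have hXsep' : IsSeparator G S' T X := sep_lift hS hX.1.1 hXr
      have := hmin.2 X hXsep'
      omega
    push_neg at hk
    -- Xf is an important S–T separator
    have hXfreachS : reachSet G Xf S' = reachSet G Xf S := by
      rw [← Set.union_diff_cancel hS, reach_absorb G hinv]
    have hXfsepS : IsSeparator G S T Xf :=
      sep_of_source_subset hmin.1 hS
    have hXfminS : IsMinimalSep G S T Xf := by
      refine ⟨hXfsepS, fun X' hss hsep' => ?_⟩
      refine hmin.isMinimalSep.2 X' hss ?_
      refine ⟨hmin.1.1.mono_left hss.subset, fun s hs t ht hr => ?_⟩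
      by_cases hsS : s ∈ S
      · exact hsep'.2 s hsS t ht hr
      · obtain ⟨s₀, hs₀, hr₀⟩ := reach_mono G hss.subset (hinv ⟨hs, hsS⟩)
        exact hsep'.2 s₀ hs₀ t ht (hr₀.trans hr)
    have hXfimp : IsImportantSep G S T Xf := by
      refine ⟨hXfminS, fun X'' hX''min hss => ?_⟩
      have hreach'' : S' \ S ⊆ reachSet G X'' S := fun z hz => hss.subset (hinv hz)
      have hX''sep' : IsSeparator G S' T X'' := sep_lift hS hX''min.1 hreach''
      have hX''reach : reachSet G X'' S' = reachSet G X'' S := by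
        rw [← Set.union_diff_cancel hS, reach_absorb G hreach'']
      refine hfar X'' hX''sep' ?_
      rw [hXfreachS, hX''reach]
      exact hss
    obtain ⟨v, hvXf, hvY⟩ := hY Xf hXfimp hk
    set S'' := insert v S' with hS''def
    have hS'' : S ⊆ S'' := hS.trans (Set.subset_insert v S')
    have hvT : v ∉ T := fun c => Set.disjoint_left.mp hmin.1.1 hvXf (Or.inr c)
    have hS''T : Disjoint S'' T := by
      rw [Set.disjoint_left]
      rintro x hx hxT
      rcases Set.mem_insert_iff.mp hx with rfl | hx
      · exact hvT hxT
      · exact Set.disjoint_left.mp hS'T hx hxT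
    have hINV'' : (∀ X'', ¬ IsSeparator G S'' T X'') ∨
        ∃ Xfn, IsMinimumSep G S'' T Xfn ∧ IsFarthest G S'' T Xfn ∧
          S'' \ S ⊆ reachSet G Xfn S := by
      by_cases hex : ∃ X'', IsSeparator G S'' T X''
      · obtain ⟨Xfn, hminn, hfarn⟩ := exists_farthest_min hex
        exact Or.inr ⟨Xfn, hminn, hfarn, inv_step hS hmin hfar hinv hvXf hminn hfarn⟩
      · push_neg at hex
        exact Or.inl (fun X'' c => hex X'' c)
    have hn'' : ∀ X'', IsSeparator G S'' T X'' → k < X''.ncard + m := by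
      intro X'' hX''
      have h1 := lambda_up hmin hfar hvXf hX''
      have h2 := hn Xf hmin.1
      omega
    obtain ⟨H', hH'c, hH'Y, hH'hit⟩ := ih S'' hS'' hS''T hINV'' hn''
    refine ⟨insert v H', ?_, ?_, ?_⟩
    · calc (insert v H').ncard ≤ H'.ncard + 1 := Set.ncard_insert_le v H'
        _ ≤ m + 1 := by omega
    · rw [Set.eq_empty_iff_forall_notMem]
      rintro z ⟨hz, hzY⟩
      rcases Set.mem_insert_iff.mp hz with rfl | hz
      · exact hvY hzY
      · rw [Set.eq_empty_iff_forall_notMem] at hH'Y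
        exact hH'Y z ⟨hz, hzY⟩
    · intro X hX hXk hXr
      by_cases hvX : v ∈ X
      · exact ⟨v, Set.mem_insert v H', hvX⟩
      · have hpush : reachSet G Xf S' ⊆ reachSet G X S := push_lemma hS hmin hfar hX hXr
        have hvreach : v ∈ reachSet G X S := by
          obtain ⟨hvn, u₀, hu₀, ha₀⟩ := hmin.isMinimalSep.subset_nbhd hvXf
          exact reach_adj G (hpush hu₀) (hX.1.1.reach_not_X u₀ (hpush hu₀)) ha₀ hvX
        have hXr'' : S'' \ S ⊆ reachSet G X S := by
          rintro w ⟨hw, hwS⟩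
          rcases Set.mem_insert_iff.mp hw with rfl | hw
          · exact hvreach
          · exact hXr ⟨hw, hwS⟩
        obtain ⟨z, hz1, hz2⟩ := hH'hit X hX hXk hXr''
        exact ⟨z, Set.mem_insert_of_mem v hz1, hz2⟩

end Main

/-- If no important `S`–`T` separator of size at most `k` is contained in `Y`,
then there is a hitting set `H` of size at most `k`, disjoint from `Y`, intersecting every
important `S`–`T` separator of size at most `k`. -/
theorem hitting_set_for_important_separators
    (G : SimpleGraph V) (S T : Set V) (hST : Disjoint S T) (k : ℕ)
    (Y : Set V)
    (hY : ∀ X, IsImportantSep G S T X → X.ncard ≤ k → (X \ Y).Nonempty) :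
    ∃ H : Set V, H.ncard ≤ k ∧ H ∩ Y = ∅ ∧
      ∀ X, IsImportantSep G S T X → X.ncard ≤ k → (H ∩ X).Nonempty := by
  have hINV : (∀ X'', ¬ IsSeparator G S T X'') ∨
      ∃ Xf, IsMinimumSep G S T Xf ∧ IsFarthest G S T Xf ∧
        S \ S ⊆ reachSet G Xf S := by
    by_cases hex : ∃ X'', IsSeparator G S T X''
    · obtain ⟨Xf, h1, h2⟩ := exists_farthest_min hex
      exact Or.inr ⟨Xf, h1, h2, by simp⟩
    · push_neg at hex
      exact Or.inl (fun X'' c => hex X'' c)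
  have hn : ∀ X'', IsSeparator G S T X'' → k < X''.ncard + k := by
    intro X'' hX''
    by_contra hle
    push_neg at hle
    have hc0 : X''.ncard = 0 := by omega
    have hXe : X'' = ∅ := (Set.ncard_eq_zero (Set.toFinite X'')).mp hc0
    subst hXe
    have hmin : IsMinimalSep G S T (∅ : Set V) := by
      refine ⟨hX'', fun X' hss _ => ?_⟩
      exact (Set.ssubset_iff_subset_ne.mp hss).2 (Set.subset_empty_iff.mp
        (Set.ssubset_iff_subset_ne.mp hss).1)
    have himp : IsImportantSep G S T (∅ : Set V) := by
      refine ⟨hmin, fun X' hX' hss => ?_⟩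
      obtain ⟨x, hx1, hx2⟩ := (Set.ssubset_iff_of_subset hss.subset).mp hss
      exact absurd (reach_mono G (Set.empty_subset X') hx1) hx2
    obtain ⟨x, hx⟩ := hY ∅ himp (by simp)
    simp at hx
  obtain ⟨H, h1, h2, h3⟩ := main_induction k Y hY k S (subset_rfl) hST hINV hn
  exact ⟨H, h1, h2, fun X hX hXk => h3 X hX hXk (by simp)⟩
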